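/- arXiv:0905.1763 — 2 statements merged into one kernel-verified Lean document; each statement's English description precedes it below -/
import Mathlib

section
/- Let G=(V,E) be a graph and 1 ≤ m ≤ |V|. Then k(G) ≥ min over m-subsets U of V of θ_E(E_G[U]; N_G[U]) − m + 1, where θ_E(E_G[U]; N_G[U]) is the minimum number of cliques of the induced subgraph N_G[U] needed to cover all edges in E_G[U]. -/
/-!
Take an acyclic digraph `D` realising `k = k(G)` and a linear order along which every arc of `D`
points upwards. Let `U` be the `m` highest vertices of `G` and `u` the lowest of them. Two adjacent
vertices have a common out-neighbour `w` in `D`; if one of them lies in `U`, then `w` lies above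
`u`. So the in-neighbourhoods of the vertices above `u`, cut down to `N_G[U]`, are cliques covering
`E_G[U]`, and there are at most `(m - 1) + k` such vertices.
-/

open SimpleGraph

/-- The competition graph of a digraph `D` (given as a relation): distinct vertices
`x`, `y` are adjacent iff they have a common out-neighbor in `D`. -/
def CompetitionGraph {V : Type*} (D : V → V → Prop) : SimpleGraph V where
  Adj x y := x ≠ y ∧ ∃ v, D x v ∧ D y v
  symm := by constructor; rintro x y ⟨h, v, hx, hy⟩; exact ⟨h.symm, v, hy, hx⟩
  loopless := by constructor; rintro x ⟨h, -⟩; exact h rfl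

/-- A digraph is acyclic iff it has no directed cycle, i.e. no vertex reaches itself
by a nonempty directed walk. -/
def DigraphAcyclic {V : Type*} (D : V → V → Prop) : Prop :=
  ∀ v, ¬ Relation.TransGen D v v

/-- The graph `G` together with `k` additional isolated vertices. -/
def addIsolated {V : Type*} (G : SimpleGraph V) (k : ℕ) : SimpleGraph (V ⊕ Fin k) where
  Adj a b := ∃ x y, a = Sum.inl x ∧ b = Sum.inl y ∧ G.Adj x y
  symm := by constructor; rintro a b ⟨x, y, rfl, rfl, h⟩; exact ⟨y, x, rfl, rfl, h.symm⟩
  loopless := by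
    constructor
    rintro a ⟨x, y, rfl, hy, h⟩
    obtain rfl := Sum.inl_injective hy
    exact G.irrefl h

/-- `G` plus `k` isolated vertices is the competition graph of some acyclic digraph. -/
def IsCompetitionWitness {V : Type*} (G : SimpleGraph V) (k : ℕ) : Prop :=
  ∃ D : (V ⊕ Fin k) → (V ⊕ Fin k) → Prop,
    DigraphAcyclic D ∧ CompetitionGraph D = addIsolated G k

/-- The competition number of `G`: the least `k` such that `G` plus `k` isolated
vertices is the competition graph of an acyclic digraph. -/
noncomputable def compNum {V : Type*} (G : SimpleGraph V) : ℕ :=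
  sInf {k | IsCompetitionWitness G k}

/-- The generalized edge clique cover number `θ_E(F; H)`: the minimum number of cliques
of `G` contained in the vertex set `H` (i.e. cliques of the induced subgraph on `H`)
needed so that every edge in `F` has both endpoints in some clique of the family. -/
noncomputable def thetaEOn {V : Type*} (G : SimpleGraph V) (F : Set (Sym2 V)) (H : Set V) : ℕ :=
  sInf {n | ∃ f : Fin n → Set V,
    (∀ i, f i ⊆ H ∧ G.IsClique (f i)) ∧ ∀ e ∈ F, ∃ i, ∀ x ∈ e, x ∈ f i}

/-- The edge clique cover number `θ_E(G)`. -/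
noncomputable def thetaE {V : Type*} (G : SimpleGraph V) : ℕ :=
  thetaEOn G G.edgeSet Set.univ

/-- The vertex clique cover number of the subgraph of `G` induced on `S`: the minimum
number of cliques of `G` contained in `S` whose union covers `S`. -/
noncomputable def thetaVOn {V : Type*} (G : SimpleGraph V) (S : Set V) : ℕ :=
  sInf {n | ∃ f : Fin n → Set V,
    (∀ i, f i ⊆ S ∧ G.IsClique (f i)) ∧ ∀ v ∈ S, ∃ i, v ∈ f i}

/-- The closed neighborhood `N_G[U]` of a vertex subset. -/
def closedNbhd {V : Type*} (G : SimpleGraph V) (U : Set V) : Set V :=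
  U ∪ {v | ∃ u ∈ U, G.Adj u v}

/-- The set `E_G[U]` of edges of `G` with at least one endpoint in `U`. -/
def incidentEdges {V : Type*} (G : SimpleGraph V) (U : Set V) : Set (Sym2 V) :=
  {e | e ∈ G.edgeSet ∧ ∃ x ∈ e, x ∈ U}

open Finset

lemma addIsolated_adj_inl {V : Type*} {G : SimpleGraph V} {k : ℕ} {x y : V} :
    (addIsolated G k).Adj (Sum.inl x) (Sum.inl y) ↔ G.Adj x y := by
  constructor
  · rintro ⟨x', y', hx, hy, h⟩
    rwa [Sum.inl_injective hx, Sum.inl_injective hy]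
  · exact fun h => ⟨x, y, rfl, rfl, h⟩

lemma exists_isCompetitionWitness {V : Type*} [Finite V] (G : SimpleGraph V) :
    ∃ k, IsCompetitionWitness G k := by
  have : Fintype V := Fintype.ofFinite V
  let edge : Fin (Nat.card G.edgeSet) ≃ G.edgeSet := (Finite.equivFin _).symm
  -- one new sink per edge, entered from both endpoints
  let D : V ⊕ Fin (Nat.card G.edgeSet) → V ⊕ Fin (Nat.card G.edgeSet) → Prop :=
    fun a b => ∃ x i, a = Sum.inl x ∧ b = Sum.inr i ∧ x ∈ (edge i : Sym2 V)
  refine ⟨_, D, fun v hv => ?_, ?_⟩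
  · obtain ⟨-, ⟨x, -, rfl, -⟩, -⟩ := Relation.TransGen.head'_iff.1 hv
    obtain ⟨_, _, _, _, _, h, _⟩ := Relation.TransGen.tail'_iff.1 hv
    exact Sum.inl_ne_inr h
  · ext a b
    constructor
    · rintro ⟨hne, w, ⟨x, i, rfl, rfl, hx⟩, ⟨y, j, rfl, hij, hy⟩⟩
      obtain rfl := Sum.inr_injective hij
      have hxy : x ≠ y := fun h => hne (congrArg Sum.inl h)
      refine addIsolated_adj_inl.2 ?_
      have := (edge i).2
      rwa [(Sym2.mem_and_mem_iff hxy).1 ⟨hx, hy⟩, SimpleGraph.mem_edgeSet] at this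
    · rintro ⟨x, y, rfl, rfl, hxy⟩
      refine ⟨fun h => hxy.ne (Sum.inl_injective h), Sum.inr (edge.symm ⟨s(x, y), hxy⟩),
        ⟨x, _, rfl, rfl, ?_⟩, ⟨y, _, rfl, rfl, ?_⟩⟩ <;>
        simp only [Equiv.apply_symm_apply, Sym2.mem_mk_left, Sym2.mem_mk_right]

lemma isCompetitionWitness_compNum {V : Type*} [Finite V] (G : SimpleGraph V) :
    IsCompetitionWitness G (compNum G) :=
  Nat.sInf_mem (exists_isCompetitionWitness G)

section Competition

variable {V : Type*} {G : SimpleGraph V} {k : ℕ} {D : V ⊕ Fin k → V ⊕ Fin k → Prop}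

lemma adj_iff_of_competitionGraph_eq (hD : CompetitionGraph D = addIsolated G k) {x y : V} :
    G.Adj x y ↔ x ≠ y ∧ ∃ w, D (Sum.inl x) w ∧ D (Sum.inl y) w := by
  rw [← addIsolated_adj_inl, ← hD]
  exact and_congr_left' Sum.inl_injective.ne_iff

lemma isClique_of_competitionGraph_eq (hD : CompetitionGraph D = addIsolated G k)
    (w : V ⊕ Fin k) : G.IsClique {x | D (Sum.inl x) w} :=
  fun _ hx _ hy hxy => (adj_iff_of_competitionGraph_eq hD).2 ⟨hxy, w, hx, hy⟩

end Competition

lemma thetaEOn_le_card {V ι : Type*} [Fintype ι] {G : SimpleGraph V} {F : Set (Sym2 V)}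
    {H : Set V} (f : ι → Set V) (hf : ∀ i, f i ⊆ H ∧ G.IsClique (f i))
    (hcover : ∀ e ∈ F, ∃ i, ∀ x ∈ e, x ∈ f i) : thetaEOn G F H ≤ Fintype.card ι := by
  let toFin := Fintype.equivFin ι
  refine Nat.sInf_le ⟨f ∘ toFin.symm, fun i => hf _, fun e he => ?_⟩
  obtain ⟨i, hi⟩ := hcover e he
  exact ⟨toFin i, by simpa using hi⟩

lemma thetaEOn_incidentEdges_le_card {V : Type*} {G : SimpleGraph V} {k : ℕ}
    {D : V ⊕ Fin k → V ⊕ Fin k → Prop} (hD : CompetitionGraph D = addIsolated G k)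
    (U : Set V) (S : Finset (V ⊕ Fin k)) (hS : ∀ x ∈ U, ∀ w, D (Sum.inl x) w → w ∈ S) :
    thetaEOn G (incidentEdges G U) (closedNbhd G U) ≤ #S := by
  rw [← Fintype.card_coe]
  refine thetaEOn_le_card (fun w : S => {x | D (Sum.inl x) w} ∩ closedNbhd G U)
    (fun w => ⟨Set.inter_subset_right,
      (isClique_of_competitionGraph_eq hD w).subset Set.inter_subset_left⟩) ?_
  rintro e ⟨he, x, hxe, hxU⟩
  obtain ⟨y, rfl⟩ := Sym2.mem_iff_exists.1 hxe
  have hxy : G.Adj x y := he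
  obtain ⟨-, w, hxw, hyw⟩ := (adj_iff_of_competitionGraph_eq hD).1 hxy
  refine ⟨⟨w, hS x hxU w hxw⟩, fun z hz => ?_⟩
  rcases Sym2.mem_iff.1 hz with rfl | rfl
  · exact ⟨hxw, Or.inl hxU⟩
  · exact ⟨hyw, Or.inr ⟨x, hxU, hxy⟩⟩

lemma DigraphAcyclic.exists_linearOrder {W : Type*} {D : W → W → Prop}
    (hD : DigraphAcyclic D) : ∃ _ : LinearOrder W, ∀ a b, D a b → a < b := by
  let _ : PartialOrder W :=
    { le := Relation.ReflTransGen D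
      le_refl := fun _ => Relation.ReflTransGen.refl
      le_trans := fun _ _ _ => Relation.ReflTransGen.trans
      le_antisymm := fun a b hab hba => by
        rcases Relation.reflTransGen_iff_eq_or_transGen.1 hab with h | h
        · exact h.symm
        · exact absurd (h.trans_left hba) (hD a) }
  refine ⟨LinearOrder.lift' toLinearExtension (fun _ _ => id), fun a b hab => ?_⟩
  refine lt_of_le_of_ne (toLinearExtension.monotone (Relation.ReflTransGen.single hab)) ?_
  rintro rfl
  exact hD a (.single hab)

lemma exists_card_filter_apply_le_eq {α β : Type*} [Fintype α] [LinearOrder β] {f : α → β}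
    (hf : Function.Injective f) {m : ℕ} (hm1 : 1 ≤ m) (hm2 : m ≤ Fintype.card α) :
    ∃ a : α, #{x | f a ≤ f x} = m := by
  let _ : LinearOrder α := LinearOrder.lift' f hf
  let e := monoEquivOfFin α rfl
  let j : Fin (Fintype.card α) := ⟨Fintype.card α - m, by omega⟩
  refine ⟨e j, ?_⟩
  have hcard : Fintype.card {i // j ≤ i} = Fintype.card {x // f (e j) ≤ f x} :=
    Fintype.card_congr (e.toEquiv.subtypeEquiv fun _ => e.le_iff_le.symm)
  rw [← Fintype.card_subtype, ← hcard, Fintype.card_subtype, filter_le_eq_Ici, Fin.card_Ici]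
  change Fintype.card α - (Fintype.card α - m) = m
  omega

lemma sInf_image_natCast_le {ι : Type*} (f : ι → ℕ) {s : Set ι} {i : ι} (hi : i ∈ s) :
    sInf ((fun j => (f j : ℤ)) '' s) ≤ f i :=
  csInf_le ⟨0, by rintro _ ⟨j, -, rfl⟩; positivity⟩ ⟨i, hi, rfl⟩

lemma card_filter_inl_lt_add_one_le {α β : Type*} [Fintype α] [DecidableEq α] [Fintype β]
    [LinearOrder (α ⊕ β)] (u : α) :
    #{w : α ⊕ β | Sum.inl u < w} + 1 ≤
      #{x : α | (Sum.inl u : α ⊕ β) ≤ Sum.inl x} + Fintype.card β := by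
  have hsub : ({w | Sum.inl u < w} : Finset (α ⊕ β)) ⊆
      (({x | (Sum.inl u : α ⊕ β) ≤ Sum.inl x} : Finset α).erase u).map .inl ∪
        univ.map .inr := by
    rintro (x | i) hw
    · have hux : (Sum.inl u : α ⊕ β) < Sum.inl x := (mem_filter.1 hw).2
      simp [hux.le, ne_of_apply_ne Sum.inl hux.ne']
    · simp
  have hu : u ∈ ({x : α | (Sum.inl u : α ⊕ β) ≤ Sum.inl x} : Finset α) := by simp
  have hle := (card_le_card hsub).trans (card_union_le _ _)
  rw [card_map, card_map, card_erase_of_mem hu, card_univ] at hle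
  have hpos := card_pos.2 ⟨u, hu⟩
  omega

theorem sano_lower_bound {V : Type*} [Fintype V] (G : SimpleGraph V)
    (m : ℕ) (hm1 : 1 ≤ m) (hm2 : m ≤ Fintype.card V) :
    (compNum G : ℤ) ≥
      (sInf ((fun U : Finset V =>
          thetaEOn G (incidentEdges G (↑U : Set V)) (closedNbhd G (↑U : Set V))) ''
        {U : Finset V | U.card = m}) : ℤ) - (m : ℤ) + 1 := by
  classical
  obtain ⟨D, hacyc, hD⟩ := isCompetitionWitness_compNum G
  obtain ⟨_, hDlt⟩ := hacyc.exists_linearOrder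
  obtain ⟨u, hU⟩ :=
    exists_card_filter_apply_le_eq (Sum.inl_injective (β := Fin (compNum G))) hm1 hm2
  have hθ := thetaEOn_incidentEdges_le_card hD (↑({x | Sum.inl u ≤ Sum.inl x} : Finset V))
    {w | Sum.inl u < w}
    fun x hx w hxw => mem_filter.2 ⟨mem_univ w, (mem_filter.1 hx).2.trans_lt (hDlt _ _ hxw)⟩
  have hcard := card_filter_inl_lt_add_one_le (β := Fin (compNum G)) u
  have hmin := sInf_image_natCast_le
    (fun U : Finset V => thetaEOn G (incidentEdges G U) (closedNbhd G U))
    (s := {U | #U = m}) hU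
  rw [Fintype.card_fin] at hcard
  omega
end

section
/- The competition number of the dodecahedron graph equals 12. -/
open SimpleGraph

/-- The edge list of the dodecahedron graph (LCF notation `[10,7,4,-4,-7,10,-4,7,-7,4]^2`):
a 20-cycle together with ten chords. -/
def dodecaEdges : List (ℕ × ℕ) :=
  [(0,1),(1,2),(2,3),(3,4),(4,5),(5,6),(6,7),(7,8),(8,9),(9,10),
   (10,11),(11,12),(12,13),(13,14),(14,15),(15,16),(16,17),(17,18),(18,19),(19,0),
   (0,10),(1,8),(2,6),(3,19),(4,17),(5,15),(7,14),(9,13),(11,18),(12,16)]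

/-- The dodecahedron graph: the 3-regular planar graph on 20 vertices with 30 edges
whose faces are pentagons. -/
def Dodecahedron : SimpleGraph (Fin 20) :=
  SimpleGraph.fromRel (fun i j => ((i : ℕ), (j : ℕ)) ∈ dodecaEdges)


/-!
If the competition graph of an acyclic digraph is triangle-free, every edge has a common prey
of its two ends, and distinct edges have distinct prey, since two edges with a common prey would
span a triangle. Acyclicity gives a vertex `m₁` without predators and a vertex `m₂ ≠ m₁` whose
only possible predator is `m₁`; neither is the prey of an edge. Hence `|E| + 2 ≤ |V| + k`, which
for the dodecahedron reads `30 + 2 ≤ 20 + k`. The bound `k = 12` is attained by an explicit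
acyclic digraph in which each of the 30 edges is the set of predators of exactly one vertex.
-/

open Finset Function

namespace SimpleGraph

variable {V : Type*} {G : SimpleGraph V}

theorem cliqueFree_three_of_forall
    (h : ∀ a b c, G.Adj a b → G.Adj a c → G.Adj b c → False) : G.CliqueFree 3 := by
  classical
  intro s hs
  obtain ⟨a, b, c, hab, hac, hbc, -⟩ := is3Clique_iff.mp hs
  exact h a b c hab hac hbc

theorem CliqueFree.eq_or_eq_of_isClique (h3 : G.CliqueFree 3) {S : Set V} (hS : G.IsClique S)
    {a b c : V} (ha : a ∈ S) (hb : b ∈ S) (hc : c ∈ S) (hab : G.Adj a b) : c = a ∨ c = b := by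
  classical
  by_contra! h
  exact h3 {a, b, c} (is3Clique_triple_iff.mpr ⟨hab, hS ha hc h.1.symm, hS hb hc h.2.symm⟩)

theorem CliqueFree.edge_eq_of_isClique (h3 : G.CliqueFree 3) {S : Set V} (hS : G.IsClique S)
    {e e' : Sym2 V} (he : e ∈ G.edgeSet) (he' : e' ∈ G.edgeSet)
    (heS : ∀ x ∈ e, x ∈ S) (he'S : ∀ x ∈ e', x ∈ S) : e = e' := by
  induction e using Sym2.ind with | _ a b => ?_
  induction e' using Sym2.ind with | _ c d => ?_
  have hmem : ∀ x ∈ s(c, d), x = a ∨ x = b := fun x hx =>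
    h3.eq_or_eq_of_isClique hS (heS a (by simp)) (heS b (by simp)) (he'S x hx) he
  rcases hmem c (by simp) with rfl | rfl <;> rcases hmem d (by simp) with rfl | rfl
  all_goals simp_all [Sym2.eq_swap]

end SimpleGraph

section Competition

variable {W : Type*} {D : W → W → Prop}

theorem digraphAcyclic_of_rank (r : W → ℕ) (hr : ∀ x y, D x y → r x < r y) :
    DigraphAcyclic D := by
  intro v hv
  have hlt : ∀ a b, Relation.TransGen D a b → r a < r b := fun a b hab => by
    induction hab with
    | single h => exact hr _ _ h
    | tail _ h ih => exact ih.trans (hr _ _ h)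
  exact lt_irrefl _ (hlt v v hv)

theorem isClique_competitionGraph_setOf (v : W) : (CompetitionGraph D).IsClique {x | D x v} :=
  fun _ hx _ hy hne => ⟨hne, v, hx, hy⟩

theorem competitionGraph_eq_of_isClique_of_cover {H : SimpleGraph W}
    (hclique : ∀ v, H.IsClique {x | D x v}) (hcover : ∀ x y, H.Adj x y → ∃ v, D x v ∧ D y v) :
    CompetitionGraph D = H := by
  ext x y
  constructor
  · rintro ⟨hne, v, hx, hy⟩
    exact hclique v hx hy hne
  · exact fun h => ⟨h.ne, hcover x y h⟩

theorem DigraphAcyclic.exists_two_minimal [Finite W] [Nontrivial W] (hD : DigraphAcyclic D) :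
    ∃ m₁ m₂, m₁ ≠ m₂ ∧ (∀ x, ¬ D x m₁) ∧ ∀ x, D x m₂ → x = m₁ := by
  have : IsStrictOrder W (Relation.TransGen D) :=
    { irrefl := hD, trans := fun _ _ _ => Relation.TransGen.trans }
  have hwf := Finite.wellFounded_of_trans_of_irrefl (Relation.TransGen D)
  obtain ⟨m₁, -, hm₁⟩ := hwf.has_min Set.univ Set.univ_nonempty
  obtain ⟨m₂, hne, hm₂⟩ := hwf.has_min {x | x ≠ m₁} (exists_ne m₁)
  exact ⟨m₁, m₂, Ne.symm hne, fun x hx => hm₁ x trivial (.single hx),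
    fun x hx => by_contra fun h => hm₂ x h (.single hx)⟩

theorem card_edgeFinset_competitionGraph_add_two_le [Fintype W] [Nontrivial W]
    [DecidableRel (CompetitionGraph D).Adj] (hD : DigraphAcyclic D)
    (h3 : (CompetitionGraph D).CliqueFree 3) :
    #(CompetitionGraph D).edgeFinset + 2 ≤ Fintype.card W := by
  classical
  obtain ⟨m₁, m₂, hne, hm₁, hm₂⟩ := hD.exists_two_minimal
  have hprey : ∀ e ∈ (CompetitionGraph D).edgeFinset, ∃ v, ∀ x ∈ e, D x v := by
    intro e he
    induction e using Sym2.ind with | _ x y => ?_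
    obtain ⟨-, v, hx, hy⟩ := mem_edgeFinset.mp he
    exact ⟨v, fun z hz => by rcases Sym2.mem_iff.mp hz with rfl | rfl <;> assumption⟩
  choose! p hp using hprey
  have hmaps : Set.MapsTo p (CompetitionGraph D).edgeFinset ({m₁, m₂}ᶜ : Finset W) := by
    intro e he
    induction e using Sym2.ind with | _ x y => ?_
    have hx := hp _ he x (by simp)
    have hy := hp _ he y (by simp)
    have hxy : x ≠ y := ((CompetitionGraph D).mem_edgeSet.mp (mem_edgeFinset.mp he)).ne
    simp only [coe_compl, coe_insert, coe_singleton, Set.mem_compl_iff, Set.mem_insert_iff,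
      Set.mem_singleton_iff, not_or]
    refine ⟨fun h => hm₁ x (h ▸ hx), fun h => hxy ?_⟩
    rw [hm₂ x (h ▸ hx), hm₂ y (h ▸ hy)]
  have hinj : Set.InjOn p (CompetitionGraph D).edgeFinset := fun e he e' he' hpe =>
    h3.edge_eq_of_isClique (isClique_competitionGraph_setOf (p e)) (mem_edgeFinset.mp he)
      (mem_edgeFinset.mp he') (hp e he) (hpe ▸ hp e' he')
  have hcard := card_le_card_of_injOn p hmaps hinj
  rw [card_compl, card_pair hne] at hcard
  have : 1 < Fintype.card W := Fintype.one_lt_card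
  omega

end Competition

section Isolated

variable {V : Type*} (G : SimpleGraph V) (k : ℕ)

theorem addIsolated_eq_map :
    addIsolated G k = G.map (Embedding.inl : V ↪ V ⊕ Fin k) := by
  ext a b
  simp only [addIsolated, map_adj, Embedding.inl_apply]
  constructor
  · rintro ⟨x, y, rfl, rfl, h⟩
    exact ⟨x, y, h, rfl, rfl⟩
  · rintro ⟨x, y, h, rfl, rfl⟩
    exact ⟨x, y, rfl, rfl, h⟩

variable {G k}

theorem IsCompetitionWitness.card_edgeFinset_add_two_le [Fintype V] [Nontrivial V]
    [DecidableRel G.Adj] (hG : G.CliqueFree 3) (h : IsCompetitionWitness G k) :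
    #G.edgeFinset + 2 ≤ Fintype.card V + k := by
  classical
  obtain ⟨D, hD, hDG⟩ := h
  rw [addIsolated_eq_map] at hDG
  have : Nontrivial (V ⊕ Fin k) := Sum.inl_injective.nontrivial
  have h3 : (CompetitionGraph D).CliqueFree 3 := by rwa [hDG, cliqueFree_map_iff]
  have hE : #(CompetitionGraph D).edgeFinset = #G.edgeFinset := by
    rw [← card_edgeFinset_map (Embedding.inl : V ↪ V ⊕ Fin k) G]
    congr!
  simpa [hE] using card_edgeFinset_competitionGraph_add_two_le hD h3

theorem isCompetitionWitness_of_cover (r : V ⊕ Fin k → ℕ) (N : V ⊕ Fin k → Finset V)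
    (hclique : ∀ v, G.IsClique (N v : Set V)) (hcover : ∀ a b, G.Adj a b → ∃ v, a ∈ N v ∧ b ∈ N v)
    (hrank : ∀ v, ∀ a ∈ N v, r (.inl a) < r v) : IsCompetitionWitness G k := by
  refine ⟨fun x v => ∃ a ∈ N v, x = .inl a, ?_, ?_⟩
  · exact digraphAcyclic_of_rank r fun x v ⟨a, ha, hx⟩ => hx ▸ hrank v a ha
  · refine competitionGraph_eq_of_isClique_of_cover ?_ ?_
    · rintro v _ ⟨a, ha, rfl⟩ _ ⟨b, hb, rfl⟩ hab
      exact ⟨a, b, rfl, rfl, hclique v ha hb fun h => hab (h ▸ rfl)⟩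
    · rintro _ _ ⟨a, b, rfl, rfl, hab⟩
      obtain ⟨v, ha, hb⟩ := hcover a b hab
      exact ⟨v, ⟨a, ha, rfl⟩, ⟨b, hb, rfl⟩⟩

end Isolated

instance : DecidableRel Dodecahedron.Adj := fun a b =>
  inferInstanceAs (Decidable (a ≠ b ∧ (_ ∨ _)))

theorem dodecahedron_isRegularOfDegree : Dodecahedron.IsRegularOfDegree 3 := by
  unfold IsRegularOfDegree; decide

theorem card_edgeFinset_dodecahedron : #Dodecahedron.edgeFinset = 30 := by
  have h := Dodecahedron.sum_degrees_eq_twice_card_edges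
  simp only [dodecahedron_isRegularOfDegree.degree_eq, sum_const, card_univ, Fintype.card_fin,
    smul_eq_mul] at h
  omega

theorem dodecahedron_cliqueFree_three : Dodecahedron.CliqueFree 3 :=
  cliqueFree_three_of_forall (by decide)

/-- Vertices `2, …, 19` of the dodecahedron each get as predators an edge between smaller vertices,
and the twelve new vertices get the remaining twelve edges. -/
def dodecahedronPredators : Fin 20 ⊕ Fin 12 → Finset (Fin 20) :=
  Sum.elim
    ![∅, ∅, {0, 1}, {1, 2}, {2, 3}, {3, 4}, {4, 5}, {5, 6}, {2, 6}, {6, 7},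
      {7, 8}, {1, 8}, {8, 9}, {9, 10}, {0, 10}, {10, 11}, {11, 12}, {12, 13}, {9, 13}, {13, 14}]
    ![{7, 14}, {14, 15}, {5, 15}, {15, 16}, {12, 16}, {16, 17}, {4, 17}, {17, 18}, {11, 18},
      {18, 19}, {3, 19}, {0, 19}]

theorem isCompetitionWitness_dodecahedron : IsCompetitionWitness Dodecahedron 12 :=
  isCompetitionWitness_of_cover (Sum.elim (fun i => i) (fun j => 20 + j))
    dodecahedronPredators (by decide) (by decide) (by decide)

theorem competition_number_dodecahedron :
    compNum Dodecahedron = 12 := by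
  refine le_antisymm (Nat.sInf_le isCompetitionWitness_dodecahedron) ?_
  refine le_csInf ⟨12, isCompetitionWitness_dodecahedron⟩ fun k hk => ?_
  have h := hk.card_edgeFinset_add_two_le dodecahedron_cliqueFree_three
  rw [card_edgeFinset_dodecahedron, Fintype.card_fin] at h
  omega
end
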